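/- Let G be the group with generators a₁, b₁, a₂, b₂ and defining relators [a₁,b₁][a₂,b₂], a₁a₂, a₁b₁⁻¹a₂b₂⁻¹, b₂b₁, and [a₁,b₁] (where [x,y] = xyx⁻¹y⁻¹). Then G is a free abelian group of rank 2, isomorphic to ℤ × ℤ, generated by the images of a₁ and b₁. -/

import Mathlib

namespace MatsumotoFibration

/-- Generators `a₁, b₁, a₂, b₂` of the free group on four letters. -/
def a₁ : FreeGroup (Fin 4) := FreeGroup.of 0
def b₁ : FreeGroup (Fin 4) := FreeGroup.of 1
def a₂ : FreeGroup (Fin 4) := FreeGroup.of 2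
def b₂ : FreeGroup (Fin 4) := FreeGroup.of 3

/-- The relators induced by the vanishing cycles `B₀, B₁, B₂, c` of Matsumoto's
genus-2 Lefschetz fibration `(X₂, f₂)`, together with the surface relator. -/
def rels : Set (FreeGroup (Fin 4)) :=
  { (a₁ * b₁ * a₁⁻¹ * b₁⁻¹) * (a₂ * b₂ * a₂⁻¹ * b₂⁻¹),
    a₁ * a₂,
    a₁ * b₁⁻¹ * a₂ * b₂⁻¹,
    b₂ * b₁,
    a₁ * b₁ * a₁⁻¹ * b₁⁻¹ }

/-! A free abelian group of rank two is recognized by a pair of commuting generators together with a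
homomorphism to `ℤ²` sending them to the standard basis. In `G`, the relators `a₁a₂` and `b₂b₁` express
`a₂, b₂` through `a₁, b₁`, the last relator makes `a₁, b₁` commute, and `aᵢ ↦ ±e₁, bᵢ ↦ ±e₂` kills every
relator. -/

def _root_.Commute.zpowHom {G : Type*} [Group G] {x y : G} (hxy : Commute x y) :
    Multiplicative (ℤ × ℤ) →* G where
  toFun v := x ^ v.toAdd.1 * y ^ v.toAdd.2
  map_one' := by simp
  map_mul' v w := by
    simp only [toAdd_mul, Prod.fst_add, Prod.snd_add, zpow_add]
    exact (hxy.zpow_zpow _ _).mul_mul_mul_comm _ _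

def mulEquivOfCommuteOfClosureEqTop {G : Type*} [Group G] {x y : G} (hxy : Commute x y)
    (hgen : Subgroup.closure {x, y} = ⊤) (φ : G →* Multiplicative (ℤ × ℤ))
    (hx : φ x = Multiplicative.ofAdd (1, 0)) (hy : φ y = Multiplicative.ofAdd (0, 1)) :
    G ≃* Multiplicative (ℤ × ℤ) :=
  MonoidHom.toMulEquiv φ hxy.zpowHom
    (MonoidHom.eq_of_eqOn_dense hgen <| by
      rintro g (rfl | rfl) <;> simp [Commute.zpowHom, hx, hy])
    (MonoidHom.ext fun v => by
      simp only [MonoidHom.comp_apply, Commute.zpowHom, MonoidHom.coe_mk, OneHom.coe_mk, map_mul,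
        map_zpow, hx, hy, MonoidHom.id_apply, ← ofAdd_zsmul, ← ofAdd_add]
      simp)

local notation "G" => PresentedGroup rels

lemma of_two_eq : (PresentedGroup.of 2 : G) = (PresentedGroup.of 0)⁻¹ :=
  (inv_eq_of_mul_eq_one_right (PresentedGroup.one_of_mem (show a₁ * a₂ ∈ rels by simp [rels]))).symm

lemma of_three_eq : (PresentedGroup.of 3 : G) = (PresentedGroup.of 1)⁻¹ :=
  eq_inv_of_mul_eq_one_left (PresentedGroup.one_of_mem (show b₂ * b₁ ∈ rels by simp [rels]))

lemma commute_of_zero_of_one : Commute (PresentedGroup.of 0 : G) (PresentedGroup.of 1) := by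
  have h := PresentedGroup.one_of_mem (show a₁ * b₁ * a₁⁻¹ * b₁⁻¹ ∈ rels by simp [rels])
  simp only [map_mul, map_inv] at h
  exact commutatorElement_eq_one_iff_commute.mp h

lemma closure_of_zero_of_one :
    Subgroup.closure ({PresentedGroup.of 0, PresentedGroup.of 1} : Set G) = ⊤ := by
  refine eq_top_iff.mpr ((PresentedGroup.closure_range_of rels).ge.trans ?_)
  rw [Subgroup.closure_le]
  rintro _ ⟨i, rfl⟩
  fin_cases i
  · exact Subgroup.subset_closure (by simp)
  · exact Subgroup.subset_closure (by simp)
  · exact of_two_eq ▸ Subgroup.inv_mem _ (Subgroup.subset_closure (by simp))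
  · exact of_three_eq ▸ Subgroup.inv_mem _ (Subgroup.subset_closure (by simp))

def toZ2 : Fin 4 → Multiplicative (ℤ × ℤ) :=
  ![Multiplicative.ofAdd (1, 0), Multiplicative.ofAdd (0, 1),
    Multiplicative.ofAdd (-1, 0), Multiplicative.ofAdd (0, -1)]

lemma lift_toZ2_eq_one : ∀ r ∈ rels, FreeGroup.lift toZ2 r = 1 := by
  rintro r (rfl | rfl | rfl | rfl | rfl) <;>
    simp [a₁, b₁, a₂, b₂, toZ2, ← ofAdd_add, ← ofAdd_neg, Prod.ext_iff]

/-- The group `G = π₁(X₂)` of Matsumoto's genus-2 Lefschetz fibration is free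
abelian of rank 2, isomorphic to `ℤ × ℤ`, generated by the images of `a₁` and `b₁`. -/
theorem pi1_matsumoto_fibration :
    Nonempty (PresentedGroup rels ≃* Multiplicative (ℤ × ℤ)) ∧
      Subgroup.closure
        ({PresentedGroup.of 0, PresentedGroup.of 1} : Set (PresentedGroup rels)) = ⊤ := by
  refine ⟨⟨mulEquivOfCommuteOfClosureEqTop commute_of_zero_of_one closure_of_zero_of_one
    (PresentedGroup.toGroup lift_toZ2_eq_one) ?_ ?_⟩, closure_of_zero_of_one⟩ <;>
    exact PresentedGroup.toGroup.of _

end MatsumotoFibration
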